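/- arXiv:1203.1467 — 10 statements merged into one kernel-verified Lean document; each statement's English description precedes it below -/
import Mathlib

section
/- Let (X,d) be a compact geodesic metric space and let r > 0 satisfy diam X > 3r. Assume X is r-perfectly geodesic, i.e.: (i) X is r-uniquely geodesic: any two points at distance < r are joined by a unique geodesic segment; and (ii) for any three points x₁, x₂, x₃ with pairwise distances < r, if the geodesic segments [x₁,x₂] and [x₁,x₃] have a common nondegenerate subsegment (a common sub-geodesic of positive length), then one of the two segments is contained in the other. Then X is topologically robust: for every ε with 0 < ε ≤ r/4 and all x, y ∈ X, if Metric.closedBall x ε = Metric.closedBall y ε then x = y (hence the map x ↦ closedBall x ε is a topological embedding of X into the hyperspace). -/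
/-- `γ` is a geodesic path from `x` to `y`, parametrized by arc length on
`[0, dist x y]`. -/
def IsGeodesicPathBetween {X : Type*} [MetricSpace X] (γ : ℝ → X) (x y : X) : Prop :=
  γ 0 = x ∧ γ (dist x y) = y ∧
    ∀ s ∈ Set.Icc (0 : ℝ) (dist x y), ∀ t ∈ Set.Icc (0 : ℝ) (dist x y),
      dist (γ s) (γ t) = |s - t|

/-- The geodesic segment determined by a geodesic path `γ` from `x` to `y`. -/
def geodesicSegment {X : Type*} [MetricSpace X] (γ : ℝ → X) (x y : X) : Set X :=
  γ '' Set.Icc (0 : ℝ) (dist x y)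

private lemma reverse_path {X : Type*} [MetricSpace X] {γ : ℝ → X} {x y : X}
    (h : IsGeodesicPathBetween γ x y) :
    IsGeodesicPathBetween (fun s => γ (dist x y - s)) y x := by
  obtain ⟨h0, h1, hiso⟩ := h
  refine ⟨by simpa using h1, by simp [dist_comm y x, h0], ?_⟩
  intro s hs t ht
  rw [dist_comm y x] at hs ht
  have hm1 : dist x y - s ∈ Set.Icc (0:ℝ) (dist x y) :=
    ⟨by linarith [hs.2], by linarith [hs.1]⟩
  have hm2 : dist x y - t ∈ Set.Icc (0:ℝ) (dist x y) :=
    ⟨by linarith [ht.2], by linarith [ht.1]⟩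
  have h3 := hiso _ hm1 _ hm2
  rw [show (dist x y - s) - (dist x y - t) = t - s by ring, abs_sub_comm] at h3
  exact h3

/-- If `(X,d)` is a compact geodesic metric space of diameter `> 3r` which is
`r`-perfectly geodesic (i.e. `r`-uniquely geodesic and, whenever two geodesic segments
issuing from a common point share a nondegenerate subsegment, one is contained in the
other), then `X` is topologically robust: for every `0 < ε ≤ r/4` the map
`x ↦ closedBall x ε` is injective. -/
theorem topologically_robust_of_r_perfectly_geodesic
    {X : Type*} [MetricSpace X] [CompactSpace X]
    (hgeo : ∀ x y : X, ∃ γ : ℝ → X, IsGeodesicPathBetween γ x y)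
    (r : ℝ) (hr : 0 < r)
    (hdiam : 3 * r < Metric.diam (Set.univ : Set X))
    (huniq : ∀ x y : X, dist x y < r →
      ∀ γ₁ γ₂ : ℝ → X, IsGeodesicPathBetween γ₁ x y → IsGeodesicPathBetween γ₂ x y →
        geodesicSegment γ₁ x y = geodesicSegment γ₂ x y)
    (hperf : ∀ x₁ x₂ x₃ : X,
      dist x₁ x₂ < r → dist x₁ x₃ < r → dist x₂ x₃ < r →
      ∀ γ₂ γ₃ : ℝ → X, IsGeodesicPathBetween γ₂ x₁ x₂ → IsGeodesicPathBetween γ₃ x₁ x₃ →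
      (∃ σ : ℝ → X, ∃ L : ℝ, 0 < L ∧
        (∀ s ∈ Set.Icc (0 : ℝ) L, ∀ t ∈ Set.Icc (0 : ℝ) L, dist (σ s) (σ t) = |s - t|) ∧
        σ '' Set.Icc (0 : ℝ) L ⊆ geodesicSegment γ₂ x₁ x₂ ∧
        σ '' Set.Icc (0 : ℝ) L ⊆ geodesicSegment γ₃ x₁ x₃) →
      geodesicSegment γ₂ x₁ x₂ ⊆ geodesicSegment γ₃ x₁ x₃ ∨
        geodesicSegment γ₃ x₁ x₃ ⊆ geodesicSegment γ₂ x₁ x₂) :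
    ∀ ε : ℝ, 0 < ε → ε ≤ r / 4 → ∀ x y : X,
      Metric.closedBall x ε = Metric.closedBall y ε → x = y := by
  intro ε hε hεr x y hball
  by_contra hxy
  have hd : 0 < dist x y := dist_pos.mpr hxy
  have hiff : ∀ p : X, dist p x ≤ ε ↔ dist p y ≤ ε := by
    intro p
    rw [← Metric.mem_closedBall, ← Metric.mem_closedBall, hball]
  have hdxy : dist x y ≤ ε := by
    have := (hiff y).mpr (by simp [hε.le])
    rwa [dist_comm] at this
  -- a point far away from x
  obtain ⟨a, b, hab⟩ : ∃ a b : X, 3 * r < dist a b := by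
    by_contra h
    push_neg at h
    have : Metric.diam (Set.univ : Set X) ≤ 3 * r :=
      Metric.diam_le_of_forall_dist_le (by positivity) fun p _ q _ => h p q
    linarith
  have htri : dist a b ≤ dist x a + dist x b := by
    rw [dist_comm x a]; exact dist_triangle a x b
  obtain ⟨w, hw⟩ : ∃ w : X, 2 * ε ≤ dist x w := by
    rcases le_total (dist x a) (dist x b) with hle | hle
    · exact ⟨b, by linarith⟩
    · exact ⟨a, by linarith⟩
  obtain ⟨γ, hγ0, hγw, hγiso⟩ := hgeo x w
  have h2εD : 2 * ε ≤ dist x w := hw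
  have hεD : ε ≤ dist x w := by linarith
  have hxt : ∀ t ∈ Set.Icc (0:ℝ) (dist x w), dist x (γ t) = t := by
    intro t ht
    have h1 := hγiso 0 ⟨le_rfl, dist_nonneg⟩ t ht
    rw [hγ0] at h1
    rw [h1, zero_sub, abs_neg, abs_of_nonneg ht.1]
  -- points of the geodesic beyond ε are outside the common ball
  have hout : ∀ t, ε < t → t ≤ dist x w → ε < dist y (γ t) := by
    intro t h1 h2
    by_contra h
    push_neg at h
    have h3 : dist (γ t) x ≤ ε := (hiff (γ t)).mpr (by rwa [dist_comm])
    rw [dist_comm, hxt t ⟨by linarith, h2⟩] at h3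
    linarith
  have hge : ∀ t, ε < t → t ≤ dist x w → t ≤ dist y (γ t) := by
    intro t h1 h2
    obtain ⟨β, hβ0, hβe, hβiso⟩ := hgeo y (γ t)
    have hεL : ε ≤ dist y (γ t) := (hout t h1 h2).le
    have hq1 : dist (β ε) y ≤ ε := by
      have h3 := hβiso 0 ⟨le_rfl, dist_nonneg⟩ ε ⟨hε.le, hεL⟩
      rw [hβ0] at h3
      rw [dist_comm, h3, zero_sub, abs_neg, abs_of_nonneg hε.le]
    have hq2 : dist (β ε) x ≤ ε := (hiff _).mpr hq1
    have hq3 : dist (β ε) (γ t) = dist y (γ t) - ε := by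
      have h3 := hβiso ε ⟨hε.le, hεL⟩ (dist y (γ t)) ⟨dist_nonneg, le_rfl⟩
      rw [hβe] at h3
      rw [h3, abs_of_nonpos (by linarith)]; ring
    have h4 := dist_triangle x (β ε) (γ t)
    rw [hxt t ⟨by linarith, h2⟩, dist_comm x (β ε)] at h4
    linarith
  have hyε : dist y (γ ε) = ε := by
    refine le_antisymm ?_ ?_
    · have h1 : dist (γ ε) x ≤ ε := by rw [dist_comm, hxt ε ⟨hε.le, hεD⟩]
      have h2 := (hiff _).mp h1
      rwa [dist_comm] at h2
    · have h2 := hge (2*ε) (by linarith) h2εD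
      have h3 : dist (γ ε) (γ (2*ε)) = ε := by
        have h4 := hγiso ε ⟨hε.le, hεD⟩ (2*ε) ⟨by positivity, h2εD⟩
        rw [h4, abs_of_nonpos (by linarith)]; ring
      have h5 := dist_triangle y (γ ε) (γ (2*ε))
      linarith
  have heq : ∀ t, ε ≤ t → t ≤ dist x w → dist y (γ t) = t := by
    intro t h1 h2
    refine le_antisymm ?_ ?_
    · have h3 : dist (γ ε) (γ t) = t - ε := by
        have h4 := hγiso ε ⟨hε.le, hεD⟩ t ⟨by linarith, h2⟩
        rw [h4, abs_of_nonpos (by linarith)]; ring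
      have h5 := dist_triangle y (γ ε) (γ t)
      linarith
    · rcases eq_or_lt_of_le h1 with h | h
      · rw [← h]; exact hyε.ge
      · exact hge t h h2
  -- a geodesic from y to γ ε, concatenated with γ
  obtain ⟨β', hβ'0, hβ'e, hβ'iso⟩ := hgeo y (γ ε)
  rw [hyε] at hβ'e hβ'iso
  set σ : ℝ → X := fun s => if s ≤ ε then β' s else γ s with hσdef
  have hσγ : ∀ s, ε ≤ s → σ s = γ s := by
    intro s hs
    by_cases h : s ≤ ε
    · have h1 : s = ε := le_antisymm h hs
      simp only [hσdef, h1, le_refl, if_true, hβ'e]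
    · simp only [hσdef, h, if_false]
  have hσβ : ∀ s, s ≤ ε → σ s = β' s := by
    intro s hs; simp only [hσdef, hs, if_true]
  have key : ∀ s ∈ Set.Icc (0:ℝ) (2*ε), ∀ t ∈ Set.Icc (0:ℝ) (2*ε), s ≤ t →
      dist (σ s) (σ t) = t - s := by
    intro s hs t ht hst
    rcases le_or_gt t ε with h | h
    · rw [hσβ s (hst.trans h), hσβ t h,
        hβ'iso s ⟨hs.1, hst.trans h⟩ t ⟨ht.1, h⟩, abs_of_nonpos (by linarith)]
      ring
    rcases le_or_gt s ε with h' | h'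
    · rw [hσβ s h', hσγ t h.le]
      refine le_antisymm ?_ ?_
      · have hc : dist (β' s) (γ t) ≤ dist (β' s) (β' ε) + dist (β' ε) (γ t) :=
          dist_triangle _ _ _
        have hc1 : dist (β' s) (β' ε) = ε - s := by
          rw [hβ'iso s ⟨hs.1, h'⟩ ε ⟨hε.le, le_rfl⟩, abs_of_nonpos (by linarith)]; ring
        have hc2 : dist (β' ε) (γ t) = t - ε := by
          rw [hβ'e, hγiso ε ⟨hε.le, hεD⟩ t ⟨by linarith, by linarith [ht.2]⟩,
            abs_of_nonpos (by linarith)]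
          ring
        linarith
      · have h1 : dist y (β' s) = s := by
          have h2 := hβ'iso 0 ⟨le_rfl, hε.le⟩ s ⟨hs.1, h'⟩
          rw [hβ'0] at h2
          rw [h2, zero_sub, abs_neg, abs_of_nonneg hs.1]
        have h2 := heq t h.le (by linarith [ht.2])
        have h3 := dist_triangle y (β' s) (γ t)
        linarith
    · rw [hσγ s h'.le, hσγ t h.le,
        hγiso s ⟨hs.1, by linarith [hs.2]⟩ t ⟨ht.1, by linarith [ht.2]⟩,
        abs_of_nonpos (by linarith)]
      ring
  have hσiso : ∀ s ∈ Set.Icc (0:ℝ) (2*ε), ∀ t ∈ Set.Icc (0:ℝ) (2*ε),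
      dist (σ s) (σ t) = |s - t| := by
    intro s hs t ht
    rcases le_total s t with h | h
    · rw [key s hs t ht h, abs_sub_comm, abs_of_nonneg (by linarith)]
    · rw [dist_comm, key t ht s hs h, abs_of_nonneg (by linarith)]
  have hdxm : dist x (γ (2*ε)) = 2*ε := hxt _ ⟨by positivity, h2εD⟩
  have hdym : dist y (γ (2*ε)) = 2*ε := heq _ (by linarith) h2εD
  have hpathx : IsGeodesicPathBetween γ x (γ (2*ε)) := by
    refine ⟨hγ0, by rw [hdxm], ?_⟩
    intro s hs t ht
    rw [hdxm] at hs ht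
    exact hγiso s ⟨hs.1, by linarith [hs.2]⟩ t ⟨ht.1, by linarith [ht.2]⟩
  have hpathy : IsGeodesicPathBetween σ y (γ (2*ε)) := by
    refine ⟨?_, ?_, ?_⟩
    · rw [hσβ 0 hε.le, hβ'0]
    · rw [hdym, hσγ _ (by linarith)]
    · intro s hs t ht
      rw [hdym] at hs ht
      exact hσiso s hs t ht
  have hrevx := reverse_path hpathx
  have hrevy := reverse_path hpathy
  have hshare : ∃ σ₀ : ℝ → X, ∃ L : ℝ, 0 < L ∧
      (∀ s ∈ Set.Icc (0:ℝ) L, ∀ t ∈ Set.Icc (0:ℝ) L, dist (σ₀ s) (σ₀ t) = |s - t|) ∧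
      σ₀ '' Set.Icc (0:ℝ) L ⊆
        geodesicSegment (fun s => γ (dist x (γ (2*ε)) - s)) (γ (2*ε)) x ∧
      σ₀ '' Set.Icc (0:ℝ) L ⊆
        geodesicSegment (fun s => σ (dist y (γ (2*ε)) - s)) (γ (2*ε)) y := by
    refine ⟨fun u => γ (ε + u), ε, hε, ?_, ?_, ?_⟩
    · intro u hu v hv
      have h1 := hγiso (ε + u) ⟨by linarith [hu.1], by linarith [hu.2]⟩
        (ε + v) ⟨by linarith [hv.1], by linarith [hv.2]⟩
      rw [h1, show (ε + u) - (ε + v) = u - v by ring]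
    · rintro p ⟨u, hu, rfl⟩
      refine ⟨ε - u, ?_, ?_⟩
      · rw [dist_comm, hdxm]
        exact ⟨by linarith [hu.2], by linarith [hu.1]⟩
      · show γ (dist x (γ (2*ε)) - (ε - u)) = γ (ε + u)
        rw [hdxm]; congr 1; ring
    · rintro p ⟨u, hu, rfl⟩
      refine ⟨ε - u, ?_, ?_⟩
      · rw [dist_comm, hdym]
        exact ⟨by linarith [hu.2], by linarith [hu.1]⟩
      · show σ (dist y (γ (2*ε)) - (ε - u)) = γ (ε + u)
        rw [hdym, show 2*ε - (ε - u) = ε + u by ring, hσγ (ε + u) (by linarith [hu.1])]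
  have hcases := hperf (γ (2*ε)) x y
    (by rw [dist_comm, hdxm]; linarith)
    (by rw [dist_comm, hdym]; linarith)
    (by linarith)
    _ _ hrevx hrevy hshare
  rcases hcases with hc | hc
  · -- x lies on the geodesic from γ(2ε) to y
    have hx : x ∈ geodesicSegment (fun s => σ (dist y (γ (2*ε)) - s)) (γ (2*ε)) y := by
      apply hc
      exact ⟨dist (γ (2*ε)) x, ⟨dist_nonneg, le_rfl⟩, hrevx.2.1⟩
    obtain ⟨s, hs, hsx⟩ := hx
    rw [dist_comm, hdym] at hs
    simp only at hsx
    rw [hdym] at hsx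
    -- hsx : σ (2ε - s) = x
    have hu : (2*ε - s) ∈ Set.Icc (0:ℝ) (2*ε) := ⟨by linarith [hs.2], by linarith [hs.1]⟩
    have h1 : dist y x = 2*ε - s := by
      rw [← hsx, ← hpathy.1]
      have := hσiso 0 ⟨le_rfl, by linarith⟩ (2*ε - s) hu
      rw [this, zero_sub, abs_neg, abs_of_nonneg hu.1]
    have h2 : dist x (γ (2*ε)) = s := by
      rw [← hsx, ← hσγ (2*ε) (by linarith)]
      rw [hσiso (2*ε - s) hu (2*ε) ⟨by linarith, le_rfl⟩, abs_of_nonpos (by linarith [hs.1])]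
      ring
    rw [hdxm] at h2
    rw [dist_comm] at h1
    linarith
  · -- y lies on the geodesic from γ(2ε) to x
    have hy : y ∈ geodesicSegment (fun s => γ (dist x (γ (2*ε)) - s)) (γ (2*ε)) x := by
      apply hc
      exact ⟨dist (γ (2*ε)) y, ⟨dist_nonneg, le_rfl⟩, hrevy.2.1⟩
    obtain ⟨s, hs, hsy⟩ := hy
    rw [dist_comm, hdxm] at hs
    simp only at hsy
    rw [hdxm] at hsy
    -- hsy : γ (2ε - s) = y
    have hu : (2*ε - s) ∈ Set.Icc (0:ℝ) (dist x w) :=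
      ⟨by linarith [hs.2], by linarith [hs.1]⟩
    have h1 : dist x y = 2*ε - s := by
      rw [← hsy, ← hγ0]
      have := hγiso 0 ⟨le_rfl, dist_nonneg⟩ (2*ε - s) hu
      rw [this, zero_sub, abs_neg, abs_of_nonneg hu.1]
    have h2 : dist y (γ (2*ε)) = s := by
      rw [← hsy]
      rw [hγiso (2*ε - s) hu (2*ε) ⟨by positivity, h2εD⟩, abs_of_nonpos (by linarith [hs.1])]
      ring
    rw [hdym] at h2
    linarith
end

section
/- Let X be a compact geodesic metric space and let A ⊆ X be a nonempty closed set. Then for all s, t ≥ 0, Metric.cthickening s (Metric.cthickening t A) = Metric.cthickening (s + t) A. (This is the semigroup law making π(A,t) := cthickening t A a semidynamical system on the hyperspace.) -/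
/-- A metric space is geodesic if any two points are joined by a geodesic path. -/
def IsGeodesicMetricSpace (X : Type*) [MetricSpace X] : Prop :=
  ∀ x y : X, ∃ γ : ℝ → X, γ 0 = x ∧ γ (dist x y) = y ∧
    ∀ s ∈ Set.Icc (0 : ℝ) (dist x y), ∀ t ∈ Set.Icc (0 : ℝ) (dist x y),
      dist (γ s) (γ t) = |s - t|

/-- In a compact geodesic metric space, thickening a nonempty closed set by `t` and then
by `s` is the same as thickening it by `s + t`: the semigroup law of the semiflow
`π(A,t) = cthickening t A` on the hyperspace. -/
theorem cthickening_cthickening_of_geodesic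
    {X : Type*} [MetricSpace X] [CompactSpace X]
    (hgeo : IsGeodesicMetricSpace X)
    (A : Set X) (hA : A.Nonempty) (hAclosed : IsClosed A)
    (s t : ℝ) (hs : 0 ≤ s) (ht : 0 ≤ t) :
    Metric.cthickening s (Metric.cthickening t A) = Metric.cthickening (s + t) A := by
  apply Set.Subset.antisymm (Metric.cthickening_cthickening_subset hs ht A)
  intro x hx
  -- find closest point a ∈ A
  obtain ⟨a, haA, hda⟩ := hAclosed.isCompact.exists_infDist_eq_dist hA x
  have hxd : dist x a ≤ s + t := by
    rw [← hda]
    rw [Metric.mem_cthickening_iff] at hx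
    have := ENNReal.toReal_mono (by simp) hx
    rwa [← Metric.infDist, ENNReal.toReal_ofReal (by linarith)] at this
  set d := dist x a with hd
  have hd0 : 0 ≤ d := dist_nonneg
  obtain ⟨γ, hγ0, hγd, hγdist⟩ := hgeo x a
  set u := min s d with hu
  have hu0 : 0 ≤ u := le_min hs hd0
  have hud : u ≤ d := min_le_right _ _
  have h1 : dist x (γ u) ≤ s := by
    have := hγdist 0 ⟨le_refl 0, hd0⟩ u ⟨hu0, hud⟩
    rw [hγ0] at this
    rw [this]
    rw [abs_of_nonpos (by linarith)]
    simp [hu]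
  have h2 : dist (γ u) a ≤ t := by
    have := hγdist u ⟨hu0, hud⟩ d ⟨hd0, le_refl d⟩
    rw [hγd] at this
    rw [this, abs_of_nonpos (by linarith)]
    rcases le_or_gt s d with h | h
    · have : u = s := min_eq_left h
      rw [this]; linarith
    · have : u = d := min_eq_right h.le
      rw [this]; linarith
  have hγmem : γ u ∈ Metric.cthickening t A :=
    Metric.mem_cthickening_of_dist_le _ a t A haA h2
  exact Metric.mem_cthickening_of_dist_le _ _ s _ hγmem h1
end

section
/- Let X be a compact geodesic metric space. The map π : NonemptyCompacts X × {t : ℝ // 0 ≤ t} → NonemptyCompacts X sending (A, t) to the nonempty compact set Metric.cthickening t A is continuous (where NonemptyCompacts X carries the Hausdorff metric). -/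
/-!
A point at distance at most `t` from `A` lies within `t + d_H(A, B)` of `B`. In a geodesic space
one can walk from a nearest point of `B` towards it for a length `u`, which reaches a point of
the `u`-thickening of `B` within `d_H(A, B) + |t - u|` of the original point. Hence
`(A, t) ↦ cthickening t A` is `2`-Lipschitz for the Hausdorff metric.
-/

open Metric Set

namespace Metric

variable {α : Type*} [PseudoMetricSpace α] {s t : Set α} {r : ℝ}

theorem subset_cthickening_hausdorffDist (h : hausdorffEDist s t ≠ ⊤) :
    s ⊆ cthickening (hausdorffDist s t) t := fun x hx => by
  rw [mem_cthickening_iff, hausdorffDist, ENNReal.ofReal_toReal h]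
  exact infEDist_le_hausdorffEDist_of_mem hx

theorem hausdorffDist_le_of_subset_cthickening (hr : 0 ≤ r) (hst : s ⊆ cthickening r t)
    (hts : t ⊆ cthickening r s) : hausdorffDist s t ≤ r :=
  hausdorffDist_le_of_infDist hr
    (fun _ hx => ENNReal.toReal_le_of_le_ofReal hr (mem_cthickening_iff.mp (hst hx)))
    (fun _ hx => ENNReal.toReal_le_of_le_ofReal hr (mem_cthickening_iff.mp (hts hx)))

end Metric

namespace IsGeodesicMetricSpace

variable {X : Type*} [MetricSpace X]

theorem exists_dist_le_dist_le (hX : IsGeodesicMetricSpace X) {x y : X} {r s : ℝ}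
    (hr : 0 ≤ r) (hs : 0 ≤ s) (hxy : dist x y ≤ r + s) : ∃ z, dist x z ≤ r ∧ dist z y ≤ s := by
  obtain ⟨γ, hγ₀, hγd, hγ⟩ := hX x y
  set d := dist x y
  have hd : 0 ≤ d := dist_nonneg
  have hm : min r d ∈ Icc 0 d := ⟨le_min hr hd, min_le_right _ _⟩
  refine ⟨γ (min r d), ?_, ?_⟩
  · rw [← hγ₀, hγ 0 ⟨le_rfl, hd⟩ _ hm, zero_sub, abs_neg, abs_of_nonneg hm.1]
    exact min_le_left _ _
  · rw [← hγd, hγ _ hm d ⟨hd, le_rfl⟩, abs_of_nonpos (sub_nonpos.mpr hm.2), neg_sub]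
    rcases le_total r d with h | h
    · rw [min_eq_left h]; linarith
    · rw [min_eq_right h, sub_self]; exact hs

theorem cthickening_add_subset (hX : IsGeodesicMetricSpace X) {B : Set X} (hB : IsCompact B)
    {r s : ℝ} (hr : 0 ≤ r) (hs : 0 ≤ s) :
    cthickening (r + s) B ⊆ cthickening s (cthickening r B) := fun x hx => by
  rw [hB.cthickening_eq_biUnion_closedBall (add_nonneg hr hs)] at hx
  obtain ⟨b, hb, hxb⟩ := mem_iUnion₂.mp hx
  obtain ⟨z, hbz, hzx⟩ := hX.exists_dist_le_dist_le hr hs (mem_closedBall'.mp hxb)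
  exact mem_cthickening_of_dist_le x z s _
    (mem_cthickening_of_dist_le z b r B hb ((dist_comm z b).trans_le hbz))
    ((dist_comm x z).trans_le hzx)

theorem cthickening_subset_cthickening_cthickening (hX : IsGeodesicMetricSpace X)
    {A B : Set X} (hB : IsCompact B) (hAB : hausdorffEDist A B ≠ ⊤) {t u : ℝ}
    (ht : 0 ≤ t) (hu : 0 ≤ u) :
    cthickening t A ⊆ cthickening (hausdorffDist A B + |t - u|) (cthickening u B) := by
  have hD : 0 ≤ hausdorffDist A B := hausdorffDist_nonneg
  calc cthickening t A
      ⊆ cthickening t (cthickening (hausdorffDist A B) B) :=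
        cthickening_subset_of_subset t (subset_cthickening_hausdorffDist hAB)
    _ ⊆ cthickening (t + hausdorffDist A B) B := cthickening_cthickening_subset ht hD B
    _ ⊆ cthickening (u + (hausdorffDist A B + |t - u|)) B :=
        cthickening_mono (by linarith [le_abs_self (t - u)]) B
    _ ⊆ _ := hX.cthickening_add_subset hB hu (add_nonneg hD (abs_nonneg _))

theorem hausdorffDist_cthickening_le (hX : IsGeodesicMetricSpace X) {A B : Set X}
    (hA : IsCompact A) (hB : IsCompact B) (hAB : hausdorffEDist A B ≠ ⊤) {t u : ℝ}
    (ht : 0 ≤ t) (hu : 0 ≤ u) :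
    hausdorffDist (cthickening t A) (cthickening u B) ≤ hausdorffDist A B + |t - u| := by
  refine hausdorffDist_le_of_subset_cthickening (add_nonneg hausdorffDist_nonneg (abs_nonneg _))
    (hX.cthickening_subset_cthickening_cthickening hB hAB ht hu) ?_
  rw [hausdorffDist_comm, abs_sub_comm]
  exact hX.cthickening_subset_cthickening_cthickening hA (hausdorffEDist_comm.trans_ne hAB) hu ht

end IsGeodesicMetricSpace

/-- The semiflow `π(A,t) = cthickening t A` on the hyperspace of a compact geodesic
metric space (nonempty compact subsets with the Hausdorff metric) is continuous as a map
`NonemptyCompacts X × {t : ℝ // 0 ≤ t} → NonemptyCompacts X`. -/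
theorem continuous_cthickening_semiflow
    {X : Type*} [MetricSpace X] [CompactSpace X]
    (hgeo : IsGeodesicMetricSpace X) :
    Continuous (fun p : TopologicalSpace.NonemptyCompacts X × {t : ℝ // 0 ≤ t} =>
      (⟨⟨Metric.cthickening p.2.1 (p.1 : Set X),
          Metric.isClosed_cthickening.isCompact⟩,
        p.1.nonempty.mono (Metric.self_subset_cthickening _)⟩ :
        TopologicalSpace.NonemptyCompacts X)) := by
  refine (LipschitzWith.of_dist_le_mul fun ⟨A, t, ht⟩ ⟨B, u, hu⟩ => ?_).continuous (K := 2)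
  have hAB : hausdorffEDist (A : Set X) B ≠ ⊤ := hausdorffEDist_ne_top_of_nonempty_of_bounded
    A.nonempty B.nonempty A.isCompact.isBounded B.isCompact.isBounded
  calc hausdorffDist (cthickening t (A : Set X)) (cthickening u (B : Set X))
      ≤ dist A B + dist t u := hgeo.hausdorffDist_cthickening_le A.isCompact B.isCompact hAB ht hu
    _ ≤ 2 * dist (A, (⟨t, ht⟩ : {t : ℝ // 0 ≤ t})) (B, ⟨u, hu⟩) := by
      rw [Prod.dist_eq, two_mul]
      exact add_le_add (le_max_left _ _) (le_max_right _ _)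
end

section
/- Let X be a compact geodesic metric space and let A ⊆ X be nonempty and closed. Let t_A := sInf {t : ℝ | 0 ≤ t ∧ Metric.cthickening t A = Set.univ}. Then for every t with 0 ≤ t ≤ t_A, Metric.hausdorffDist (Metric.cthickening t A) Set.univ = t_A - t. In particular Metric.cthickening t_A A = Set.univ and Metric.hausdorffDist A Set.univ = t_A. -/
/-!
Let `x₀` be a point farthest from `A`, at distance `M`; then `t_A = M`. Every point `x` lies
within `M - t` of `cthickening t A`: walk a distance `t` from a near-nearest point of `A` along a
geodesic towards `x`. Conversely, by the triangle inequality `x₀` stays at distance at least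
`M - t` from `cthickening t A`, so `x₀` realises the Hausdorff distance `M - t` to the whole
space.
-/

open Metric Set

namespace Metric

variable {X : Type*} [MetricSpace X] {A : Set X} {t : ℝ}

lemma mem_cthickening_iff_infDist_le (hA : A.Nonempty) (ht : 0 ≤ t) {x : X} :
    x ∈ cthickening t A ↔ infDist x A ≤ t := by
  rw [mem_cthickening_iff, infDist, ← ENNReal.le_ofReal_iff_toReal_le (infEDist_ne_top hA) ht]

lemma cthickening_eq_univ_iff (hA : A.Nonempty) (ht : 0 ≤ t) :
    cthickening t A = univ ↔ ∀ x, infDist x A ≤ t := by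
  simp only [eq_univ_iff_forall, mem_cthickening_iff_infDist_le hA ht]

lemma sInf_setOf_cthickening_eq_univ (hA : A.Nonempty) {x₀ : X}
    (hmax : ∀ x, infDist x A ≤ infDist x₀ A) :
    sInf {t : ℝ | 0 ≤ t ∧ cthickening t A = univ} = infDist x₀ A := by
  have hset : {t : ℝ | 0 ≤ t ∧ cthickening t A = univ} = Ici (infDist x₀ A) := by
    ext t
    simp only [mem_ofPred_eq, mem_Ici]
    constructor
    · rintro ⟨ht, hcover⟩
      exact (cthickening_eq_univ_iff hA ht).1 hcover x₀
    · intro ht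
      have ht0 : 0 ≤ t := infDist_nonneg.trans ht
      exact ⟨ht0, (cthickening_eq_univ_iff hA ht0).2 fun x => (hmax x).trans ht⟩
  rw [hset, csInf_Ici]

lemma infDist_le_infDist_cthickening_add (hA : A.Nonempty) (ht : 0 ≤ t) (x : X) :
    infDist x A ≤ infDist x (cthickening t A) + t := by
  have hne : (cthickening t A).Nonempty := hA.mono (self_subset_cthickening A)
  refine le_of_forall_pos_lt_add fun ε hε => ?_
  obtain ⟨y, hy, hxy⟩ :=
    (infDist_lt_iff hne).1 (lt_add_of_pos_right (infDist x (cthickening t A)) hε)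
  calc infDist x A ≤ infDist y A + dist x y := infDist_le_infDist_add_dist
    _ < t + (infDist x (cthickening t A) + ε) :=
      add_lt_add_of_le_of_lt ((mem_cthickening_iff_infDist_le hA ht).1 hy) hxy
    _ = infDist x (cthickening t A) + t + ε := by ring

lemma hausdorffDist_univ_eq_of_forall_infDist_le [BoundedSpace X] {s : Set X}
    (hs : s.Nonempty) {x₀ : X} (hmax : ∀ x, infDist x s ≤ infDist x₀ s) :
    hausdorffDist s univ = infDist x₀ s := by
  apply le_antisymm
  · refine hausdorffDist_le_of_infDist infDist_nonneg (fun x _ => ?_) (fun x _ => hmax x)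
    rw [infDist_zero_of_mem (mem_univ x)]
    exact infDist_nonneg
  · rw [hausdorffDist_comm]
    exact infDist_le_hausdorffDist_of_mem (mem_univ x₀)
      (hausdorffEDist_ne_top_of_nonempty_of_bounded ⟨x₀, mem_univ x₀⟩ hs
        (Bornology.IsBounded.all univ) (Bornology.IsBounded.all s))

end Metric

namespace IsGeodesicMetricSpace

variable {X : Type*} [MetricSpace X]

lemma exists_dist_eq_of_le_dist (hgeo : IsGeodesicMetricSpace X) {a x : X} {t : ℝ}
    (ht0 : 0 ≤ t) (ht : t ≤ dist a x) : ∃ y, dist y a = t ∧ dist y x = dist a x - t := by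
  obtain ⟨γ, hγa, hγx, hγ⟩ := hgeo a x
  have h0 : (0 : ℝ) ∈ Icc 0 (dist a x) := ⟨le_rfl, dist_nonneg⟩
  have hd : dist a x ∈ Icc 0 (dist a x) := ⟨dist_nonneg, le_rfl⟩
  refine ⟨γ t, ?_, ?_⟩
  · rw [← hγa, hγ t ⟨ht0, ht⟩ 0 h0, sub_zero, abs_of_nonneg ht0]
  · rw [dist_comm, ← hγx, hγ _ hd t ⟨ht0, ht⟩, hγx, abs_of_nonneg (sub_nonneg.2 ht)]

lemma infDist_cthickening_le (hgeo : IsGeodesicMetricSpace X) {A : Set X} (hA : A.Nonempty)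
    {t : ℝ} (ht : 0 ≤ t) (x : X) : infDist x (cthickening t A) ≤ max (infDist x A - t) 0 := by
  refine le_of_forall_pos_lt_add fun ε hε => ?_
  obtain ⟨a, ha, hxa⟩ := (infDist_lt_iff hA).1 (lt_add_of_pos_right (infDist x A) hε)
  rcases le_or_gt t (dist a x) with hta | hta
  · obtain ⟨y, hya, hyx⟩ := hgeo.exists_dist_eq_of_le_dist ht hta
    have hy : y ∈ cthickening t A := mem_cthickening_of_dist_le y a t A ha hya.le
    calc infDist x (cthickening t A) ≤ dist x y := infDist_le_dist_of_mem hy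
      _ = dist a x - t := by rw [dist_comm, hyx]
      _ < infDist x A - t + ε := by rw [dist_comm] at hxa; linarith
      _ ≤ max (infDist x A - t) 0 + ε := by gcongr; exact le_max_left _ _
  · have hx : x ∈ cthickening t A := mem_cthickening_of_dist_le x a t A ha (by
      rw [dist_comm]; exact hta.le)
    rw [infDist_zero_of_mem hx]
    exact lt_add_of_le_of_pos (le_max_right _ _) hε

lemma hausdorffDist_cthickening_univ [BoundedSpace X] (hgeo : IsGeodesicMetricSpace X)
    {A : Set X} (hA : A.Nonempty) {x₀ : X} (hmax : ∀ x, infDist x A ≤ infDist x₀ A)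
    {t : ℝ} (ht0 : 0 ≤ t) (ht : t ≤ infDist x₀ A) :
    hausdorffDist (cthickening t A) univ = infDist x₀ A - t := by
  have hfar : ∀ x, infDist x (cthickening t A) ≤ infDist x₀ A - t := fun x =>
    (hgeo.infDist_cthickening_le hA ht0 x).trans
      (max_le (by linarith [hmax x]) (by linarith))
  have hx₀ : infDist x₀ (cthickening t A) = infDist x₀ A - t :=
    le_antisymm (hfar x₀) (by linarith [infDist_le_infDist_cthickening_add hA ht0 x₀])
  rw [hausdorffDist_univ_eq_of_forall_infDist_le (hA.mono (self_subset_cthickening A))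
    (hx₀ ▸ hfar), hx₀]

end IsGeodesicMetricSpace

/-- In a compact geodesic metric space, along the trajectory of a nonempty closed set
`A` under the semiflow, the Hausdorff distance to the whole space decreases linearly:
`d_H(cthickening t A, univ) = t_A - t` for `0 ≤ t ≤ t_A`, where `t_A` is the extinction
time of `A`; in particular `cthickening t_A A = univ` and `d_H(A, univ) = t_A`. -/
theorem hausdorffDist_cthickening_univ_eq
    {X : Type*} [MetricSpace X] [CompactSpace X]
    (hgeo : IsGeodesicMetricSpace X)
    (A : Set X) (hA : A.Nonempty) (hAclosed : IsClosed A)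
    (tA : ℝ) (htA : tA = sInf {t : ℝ | 0 ≤ t ∧ Metric.cthickening t A = Set.univ}) :
    (∀ t : ℝ, 0 ≤ t → t ≤ tA →
      Metric.hausdorffDist (Metric.cthickening t A) Set.univ = tA - t) ∧
    Metric.cthickening tA A = Set.univ ∧
    Metric.hausdorffDist A Set.univ = tA := by
  have : Nonempty X := ⟨hA.some⟩
  obtain ⟨x₀, -, hx₀⟩ :=
    isCompact_univ.exists_isMaxOn univ_nonempty (continuous_infDist_pt A).continuousOn
  have hmax : ∀ x, infDist x A ≤ infDist x₀ A := fun x => hx₀ (mem_univ x)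
  rw [sInf_setOf_cthickening_eq_univ hA hmax] at htA
  subst htA
  have hflow : ∀ t : ℝ, 0 ≤ t → t ≤ infDist x₀ A →
      hausdorffDist (cthickening t A) univ = infDist x₀ A - t :=
    fun t => hgeo.hausdorffDist_cthickening_univ hA hmax
  refine ⟨hflow, (cthickening_eq_univ_iff hA infDist_nonneg).2 hmax, ?_⟩
  simpa [hAclosed.closure_eq] using hflow 0 le_rfl infDist_nonneg
end

section
/- Let X be a compact geodesic metric space with more than one point and let 0 ≤ ε < Metric.diam (Set.univ : Set X). Then there is a strong deformation retraction of the hyperspace onto P(ε,X) := {A ∈ NonemptyCompacts X | Metric.diam (A : Set X) ≥ ε}: a continuous map G : NonemptyCompacts X × [0,1] → NonemptyCompacts X with G(A,0) = A for all A, G(A,1) ∈ P(ε,X) for all A, and G(A,t) = A for every A ∈ P(ε,X) and every t ∈ [0,1]. -/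
open Metric Set TopologicalSpace

namespace SDRBig

variable {X : Type*} [MetricSpace X]

/-- Closed thickening via the existence of a near point. -/
def thick (r : ℝ) (A : Set X) : Set X := {x | ∃ a ∈ A, dist x a ≤ r}

lemma subset_thick {r : ℝ} (hr : 0 ≤ r) (A : Set X) : A ⊆ thick r A :=
  fun a ha => ⟨a, ha, by simpa using hr⟩

lemma thick_mono {r s : ℝ} (h : r ≤ s) (A : Set X) : thick r A ⊆ thick s A :=
  fun _ ⟨a, ha, hd⟩ => ⟨a, ha, hd.trans h⟩

lemma thick_zero (A : Set X) : thick (0:ℝ) A = A := by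
  ext x
  constructor
  · rintro ⟨a, ha, hd⟩
    have : dist x a = 0 := le_antisymm hd dist_nonneg
    rwa [dist_eq_zero.1 this]
  · intro hx; exact ⟨x, hx, by simp⟩

lemma thick_isCompact [CompactSpace X] {A : Set X} (hA : IsCompact A) (r : ℝ) :
    IsCompact (thick r A) := by
  have himg : thick r A = Prod.fst '' {p : X × X | p.2 ∈ A ∧ dist p.1 p.2 ≤ r} := by
    ext x
    simp only [thick, mem_setOf_eq, mem_image, Prod.exists]
    constructor
    · rintro ⟨a, ha, hd⟩; exact ⟨x, a, ⟨ha, hd⟩, rfl⟩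
    · rintro ⟨x', a, ⟨ha, hd⟩, rfl⟩; exact ⟨a, ha, hd⟩
  rw [himg]
  have hcl : IsClosed {p : X × X | p.2 ∈ A ∧ dist p.1 p.2 ≤ r} :=
    (hA.isClosed.preimage continuous_snd).inter
      (isClosed_le (continuous_fst.dist continuous_snd) continuous_const)
  exact hcl.isCompact.image continuous_fst

lemma thick_nonempty {r : ℝ} (hr : 0 ≤ r) {A : Set X} (hA : A.Nonempty) :
    (thick r A).Nonempty :=
  hA.mono (subset_thick hr A)

/-- In a geodesic space, one can approach a point `b` to within `s`. -/
lemma approach (hgeo : IsGeodesicMetricSpace X) (x b : X) {s : ℝ} (hs : 0 ≤ s) :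
    ∃ y : X, dist y b ≤ s ∧ dist x y ≤ max 0 (dist x b - s) := by
  rcases le_or_gt (dist x b) s with h | h
  · exact ⟨x, h, by simp⟩
  · obtain ⟨γ, h0, hd, hiso⟩ := hgeo x b
    set d := dist x b with hdd
    have hd0 : 0 ≤ d := dist_nonneg
    refine ⟨γ (d - s), ?_, ?_⟩
    · have h1 := hiso (d - s) ⟨by linarith, by linarith⟩ d ⟨hd0, le_refl _⟩
      rw [hd] at h1
      rw [h1, abs_of_nonpos (by linarith)]
      linarith
    · have h2 := hiso 0 ⟨le_refl _, hd0⟩ (d - s) ⟨by linarith, by linarith⟩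
      rw [h0] at h2
      rw [h2, abs_of_nonpos (by linarith)]
      exact le_max_of_le_right (by linarith)

/-- One-sided approach for thickenings. -/
lemma approach_thick (hgeo : IsGeodesicMetricSpace X) {A : Set X} {r s : ℝ} (hs : 0 ≤ s)
    {x : X} (hx : x ∈ thick r A) :
    ∃ y ∈ thick s A, dist x y ≤ max 0 (r - s) := by
  obtain ⟨a, ha, hd⟩ := hx
  obtain ⟨y, hy1, hy2⟩ := approach hgeo x a hs
  exact ⟨y, ⟨a, ha, hy1⟩, hy2.trans (max_le_max (le_refl _) (by linarith))⟩

lemma bounded_all [CompactSpace X] (S : Set X) : Bornology.IsBounded S :=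
  (isCompact_univ.isBounded).subset (subset_univ S)

/-- Diameter comparison via uniform approach. -/
lemma diam_le_diam_add [CompactSpace X] (S T : Set X) {h : ℝ} (hh : 0 ≤ h)
    (H : ∀ x ∈ S, ∃ y ∈ T, dist x y ≤ h) : diam S ≤ diam T + 2 * h := by
  apply diam_le_of_forall_dist_le (by have := diam_nonneg (s := T); linarith)
  intro x hx x' hx'
  obtain ⟨y, hy, hxy⟩ := H x hx
  obtain ⟨y', hy', hxy'⟩ := H x' hx'
  have hyy : dist y y' ≤ diam T := dist_le_diam_of_mem (bounded_all T) hy hy'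
  calc dist x x' ≤ dist x y + dist y y' + dist y' x' := dist_triangle4 x y y' x'
    _ ≤ h + diam T + h := by
        have : dist y' x' = dist x' y' := dist_comm _ _
        rw [this]; gcongr
    _ = diam T + 2 * h := by ring

noncomputable def rstar [CompactSpace X] (ε : ℝ) (A : Set X) : ℝ :=
  sInf {r : ℝ | 0 ≤ r ∧ ε ≤ diam (thick r A)}

variable [CompactSpace X] {ε : ℝ}

lemma thick_diam_univ {A : Set X} (hA : A.Nonempty) :
    thick (diam (univ : Set X)) A = univ := by
  obtain ⟨a, ha⟩ := hA
  refine eq_univ_of_forall fun x => ⟨a, ha, ?_⟩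
  exact dist_le_diam_of_mem (bounded_all univ) (mem_univ x) (mem_univ a)

lemma diam_univ_mem (hε : ε ≤ diam (univ : Set X)) {A : Set X} (hA : A.Nonempty) :
    diam (univ : Set X) ∈ {r : ℝ | 0 ≤ r ∧ ε ≤ diam (thick r A)} := by
  refine ⟨diam_nonneg, ?_⟩
  rw [thick_diam_univ hA]
  exact hε

lemma rstar_set_nonempty (hε : ε ≤ diam (univ : Set X)) {A : Set X} (hA : A.Nonempty) :
    {r : ℝ | 0 ≤ r ∧ ε ≤ diam (thick r A)}.Nonempty :=
  ⟨_, diam_univ_mem hε hA⟩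

lemma rstar_bddBelow (A : Set X) :
    BddBelow {r : ℝ | 0 ≤ r ∧ ε ≤ diam (thick r A)} :=
  ⟨0, fun _ hr => hr.1⟩

lemma rstar_nonneg (hε : ε ≤ diam (univ : Set X)) {A : Set X} (hA : A.Nonempty) :
    0 ≤ rstar ε A :=
  le_csInf (rstar_set_nonempty hε hA) fun _ hr => hr.1

lemma rstar_le_diam_univ (hε : ε ≤ diam (univ : Set X)) {A : Set X} (hA : A.Nonempty) :
    rstar ε A ≤ diam (univ : Set X) :=
  csInf_le (rstar_bddBelow A) (diam_univ_mem hε hA)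

lemma rstar_eq_zero (hε : ε ≤ diam (univ : Set X)) {A : Set X} (hA : A.Nonempty)
    (h : ε ≤ diam A) : rstar ε A = 0 := by
  refine le_antisymm (csInf_le (rstar_bddBelow A) ⟨le_refl _, ?_⟩) (rstar_nonneg hε hA)
  rwa [thick_zero]

/-- The infimum achieves the diameter bound, thanks to geodesicity. -/
lemma rstar_spec (hgeo : IsGeodesicMetricSpace X) (hε : ε ≤ diam (univ : Set X))
    {A : Set X} (hA : A.Nonempty) : ε ≤ diam (thick (rstar ε A) A) := by
  refine le_of_forall_pos_le_add fun δ hδ => ?_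
  have h2 : rstar ε A < rstar ε A + δ / 2 := by linarith
  obtain ⟨r, hr, hrlt⟩ := exists_lt_of_csInf_lt (rstar_set_nonempty hε hA) h2
  have hr0 : rstar ε A ≤ r := csInf_le (rstar_bddBelow A) hr
  have hrs : 0 ≤ rstar ε A := rstar_nonneg hε hA
  have key : diam (thick r A) ≤ diam (thick (rstar ε A) A) + 2 * (r - rstar ε A) := by
    apply diam_le_diam_add _ _ (by linarith)
    intro x hx
    obtain ⟨y, hy, hxy⟩ := approach_thick hgeo hrs hx
    exact ⟨y, hy, hxy.trans (by rw [max_eq_right (by linarith)])⟩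
  have := hr.2
  linarith

lemma hausdorffEdist_fin {A B : Set X} (hA : A.Nonempty) (hB : B.Nonempty) :
    EMetric.hausdorffEdist A B ≠ ⊤ :=
  hausdorffEdist_ne_top_of_nonempty_of_bounded hA hB (bounded_all A) (bounded_all B)

/-- `rstar` is 1-Lipschitz for the Hausdorff distance (one-sided version). -/
lemma rstar_le (hε : ε ≤ diam (univ : Set X)) {A B : Set X}
    (hA : A.Nonempty) (hB : B.Nonempty) (hBc : IsCompact B) :
    rstar ε B ≤ rstar ε A + hausdorffDist A B := by
  set d := hausdorffDist A B with hdd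
  have hd0 : 0 ≤ d := hausdorffDist_nonneg
  have key : ∀ r ∈ {r : ℝ | 0 ≤ r ∧ ε ≤ diam (thick r A)}, rstar ε B ≤ r + d := by
    rintro r ⟨hr0, hrd⟩
    have hsub : thick r A ⊆ thick (r + d) B := by
      rintro x ⟨a, ha, hxa⟩
      obtain ⟨b, hb, hab⟩ := hBc.exists_infDist_eq_dist hB a
      have h1 : infDist a B ≤ d := infDist_le_hausdorffDist_of_mem ha (hausdorffEdist_fin hA hB)
      exact ⟨b, hb, by
        calc dist x b ≤ dist x a + dist a b := dist_triangle _ _ _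
          _ ≤ r + d := by rw [← hab]; exact add_le_add hxa h1⟩
    refine csInf_le (rstar_bddBelow B) ⟨by linarith, ?_⟩
    exact hrd.trans (diam_mono hsub (bounded_all _))
  have : rstar ε B - d ≤ rstar ε A := by
    apply le_csInf (rstar_set_nonempty hε hA)
    intro r hr
    have := key r hr
    linarith
  linarith

/-- Main Hausdorff distance estimate for thickenings in a geodesic space. -/
lemma haus_thick (hgeo : IsGeodesicMetricSpace X) {A B : Set X}
    (hA : A.Nonempty) (hB : B.Nonempty) (hAc : IsCompact A) (hBc : IsCompact B)
    {r s : ℝ} (hr : 0 ≤ r) (hs : 0 ≤ s) :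
    hausdorffDist (thick r A) (thick s B) ≤ |r - s| + hausdorffDist A B := by
  set d := hausdorffDist A B with hdd
  have hd0 : 0 ≤ d := hausdorffDist_nonneg
  have habs : 0 ≤ |r - s| := abs_nonneg _
  have one_sided : ∀ (C D : Set X), C.Nonempty → D.Nonempty → IsCompact D →
      ∀ (u v : ℝ), 0 ≤ v →
      ∀ x ∈ thick u C, ∃ y ∈ thick v D, dist x y ≤ max 0 (u - v) + hausdorffDist C D := by
    rintro C E hC hE hEc u v hv x ⟨a, ha, hxa⟩
    obtain ⟨b, hb, hab⟩ := hEc.exists_infDist_eq_dist hE a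
    have h1 : infDist a E ≤ hausdorffDist C E :=
      infDist_le_hausdorffDist_of_mem ha (hausdorffEdist_fin hC hE)
    have hxb : dist x b ≤ u + hausdorffDist C E := by
      calc dist x b ≤ dist x a + dist a b := dist_triangle _ _ _
        _ ≤ u + hausdorffDist C E := by rw [← hab]; exact add_le_add hxa h1
    obtain ⟨y, hy1, hy2⟩ := approach hgeo x b hv
    refine ⟨y, ⟨b, hb, hy1⟩, ?_⟩
    refine hy2.trans ?_
    have hCE : 0 ≤ hausdorffDist C E := hausdorffDist_nonneg
    rcases le_or_gt (dist x b - v) 0 with h | h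
    · rw [max_eq_left h]; positivity
    · rw [max_eq_right h.le]
      have : dist x b - v ≤ (u - v) + hausdorffDist C E := by linarith
      refine this.trans ?_
      gcongr
      exact le_max_right _ _
  apply hausdorffDist_le_of_mem_dist (by linarith)
  · intro x hx
    obtain ⟨y, hy, hxy⟩ := one_sided A B hA hB hBc r s hs x hx
    refine ⟨y, hy, hxy.trans ?_⟩
    have : max 0 (r - s) ≤ |r - s| := max_le habs (le_abs_self _)
    linarith
  · intro x hx
    obtain ⟨y, hy, hxy⟩ := one_sided B A hB hA hAc s r hr x hx
    refine ⟨y, hy, hxy.trans ?_⟩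
    have h1 : max 0 (s - r) ≤ |r - s| := by
      rw [abs_sub_comm]
      exact max_le (abs_nonneg _) (le_abs_self _)
    have h2 : hausdorffDist B A = d := hausdorffDist_comm
    rw [h2]
    linarith

end SDRBig

open SDRBig

/-- For a compact geodesic metric space `X` with more than one point and
`0 ≤ ε < diam X`, there is a strong deformation retraction of the hyperspace
`NonemptyCompacts X` onto `P(ε,X) = {A | diam A ≥ ε}`. -/
theorem strong_deformation_retraction_onto_bigSets
    {X : Type*} [MetricSpace X] [CompactSpace X] [Nontrivial X]
    (hgeo : IsGeodesicMetricSpace X)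
    (ε : ℝ) (hε : 0 ≤ ε) (hεdiam : ε < Metric.diam (Set.univ : Set X)) :
    ∃ G : TopologicalSpace.NonemptyCompacts X × Set.Icc (0 : ℝ) 1 →
        TopologicalSpace.NonemptyCompacts X,
      Continuous G ∧
      (∀ A : TopologicalSpace.NonemptyCompacts X, G (A, ⟨0, by norm_num⟩) = A) ∧
      (∀ A : TopologicalSpace.NonemptyCompacts X,
        ε ≤ Metric.diam ((G (A, ⟨1, by norm_num⟩) : TopologicalSpace.NonemptyCompacts X) :
          Set X)) ∧
      (∀ A : TopologicalSpace.NonemptyCompacts X, ε ≤ Metric.diam (A : Set X) →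
        ∀ t : Set.Icc (0 : ℝ) 1, G (A, t) = A) := by
  classical
  set D := Metric.diam (Set.univ : Set X) with hD
  have hεD : ε ≤ D := hεdiam.le
  have hD0 : 0 ≤ D := Metric.diam_nonneg
  -- the radius function
  have hρ0 : ∀ (A : TopologicalSpace.NonemptyCompacts X) (t : Set.Icc (0:ℝ) 1),
      0 ≤ (t : ℝ) * rstar ε (A : Set X) :=
    fun A t => mul_nonneg t.2.1 (rstar_nonneg hεD A.nonempty)
  refine ⟨fun p => ⟨⟨thick ((p.2 : ℝ) * rstar ε (p.1 : Set X)) (p.1 : Set X),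
      thick_isCompact p.1.isCompact _⟩,
      thick_nonempty (hρ0 p.1 p.2) p.1.nonempty⟩, ?_, ?_, ?_, ?_⟩
  · -- continuity
    rw [Metric.continuous_iff]
    rintro ⟨A, t⟩ ε' hε'
    refine ⟨ε' / (D + 3), by positivity, ?_⟩
    rintro ⟨B, u⟩ hdist
    rw [Prod.dist_eq] at hdist
    have hdAB : Metric.hausdorffDist (B : Set X) (A : Set X) < ε' / (D + 3) :=
      lt_of_le_of_lt (le_max_left _ _) hdist
    have hdtu : |(u : ℝ) - (t : ℝ)| < ε' / (D + 3) := by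
      have := lt_of_le_of_lt (le_max_right _ _) hdist
      rwa [Subtype.dist_eq, Real.dist_eq] at this
    have hrB : |rstar ε (B : Set X) - rstar ε (A : Set X)| ≤
        Metric.hausdorffDist (B : Set X) (A : Set X) := by
      rw [abs_le]
      constructor
      · have := rstar_le hεD B.nonempty A.nonempty A.isCompact
        linarith
      · have := rstar_le hεD A.nonempty B.nonempty B.isCompact
        rw [Metric.hausdorffDist_comm (s := (A : Set X))] at this
        linarith
    have hrBle : rstar ε (B : Set X) ≤ D := rstar_le_diam_univ hεD B.nonempty
    have hrB0 : 0 ≤ rstar ε (B : Set X) := rstar_nonneg hεD B.nonempty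
    -- distance bound
    rw [Metric.NonemptyCompacts.dist_eq]
    have hmain := haus_thick hgeo B.nonempty A.nonempty B.isCompact A.isCompact
      (hρ0 B u) (hρ0 A t)
    have hρdiff : |(u : ℝ) * rstar ε (B : Set X) - (t : ℝ) * rstar ε (A : Set X)| ≤
        |(u : ℝ) - (t : ℝ)| * D + |rstar ε (B : Set X) - rstar ε (A : Set X)| := by
      have : (u : ℝ) * rstar ε (B : Set X) - (t : ℝ) * rstar ε (A : Set X) =
          ((u : ℝ) - (t : ℝ)) * rstar ε (B : Set X) +
            (t : ℝ) * (rstar ε (B : Set X) - rstar ε (A : Set X)) := by ring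
      rw [this]
      refine (abs_add_le _ _).trans ?_
      rw [abs_mul, abs_mul]
      have ht1 : |(t : ℝ)| ≤ 1 := by rw [abs_of_nonneg t.2.1]; exact t.2.2
      gcongr
      · rw [abs_of_nonneg hrB0]; exact hrBle
      · calc |(t : ℝ)| * |rstar ε (B : Set X) - rstar ε (A : Set X)| ≤
            1 * |rstar ε (B : Set X) - rstar ε (A : Set X)| := by gcongr
          _ = _ := one_mul _
    have hABnn : 0 ≤ Metric.hausdorffDist (B : Set X) (A : Set X) :=
      Metric.hausdorffDist_nonneg
    have hδ : 0 < ε' / (D + 3) := by positivity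
    calc Metric.hausdorffDist
          (thick ((u : ℝ) * rstar ε (B : Set X)) (B : Set X))
          (thick ((t : ℝ) * rstar ε (A : Set X)) (A : Set X))
        ≤ |(u : ℝ) * rstar ε (B : Set X) - (t : ℝ) * rstar ε (A : Set X)| +
            Metric.hausdorffDist (B : Set X) (A : Set X) := hmain
      _ ≤ |(u : ℝ) - (t : ℝ)| * D + |rstar ε (B : Set X) - rstar ε (A : Set X)| +
            Metric.hausdorffDist (B : Set X) (A : Set X) := by linarith
      _ ≤ |(u : ℝ) - (t : ℝ)| * D + 2 * Metric.hausdorffDist (B : Set X) (A : Set X) := by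
            linarith
      _ < (ε' / (D + 3)) * D + 2 * (ε' / (D + 3)) := by
            have h1 : |(u : ℝ) - (t : ℝ)| * D ≤ (ε' / (D + 3)) * D := by
              apply mul_le_mul_of_nonneg_right hdtu.le hD0
            nlinarith
      _ < ε' := by
            have : (ε' / (D + 3)) * (D + 3) = ε' := by field_simp
            nlinarith
  · -- G(A, 0) = A
    intro A
    apply TopologicalSpace.NonemptyCompacts.ext
    show thick ((0:ℝ) * rstar ε (A : Set X)) (A : Set X) = (A : Set X)
    rw [zero_mul, thick_zero]
  · -- diam G(A,1) ≥ ε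
    intro A
    show ε ≤ Metric.diam (thick ((1:ℝ) * rstar ε (A : Set X)) (A : Set X))
    rw [one_mul]
    exact rstar_spec hgeo hεD A.nonempty
  · -- identity on big sets
    intro A hA t
    apply TopologicalSpace.NonemptyCompacts.ext
    show thick ((t : ℝ) * rstar ε (A : Set X)) (A : Set X) = (A : Set X)
    rw [rstar_eq_zero hεD A.nonempty hA, mul_zero, thick_zero]
end

section
/- Let X be a compact connected geodesic metric space, let A ⊆ X be nonempty, and let 0 < ε₀ < ε₁. If Metric.cthickening ε₀ A ≠ Set.univ, then Metric.cthickening ε₀ A is strictly contained in Metric.cthickening ε₁ A. -/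
/-! `infDist · A` is continuous and vanishes on `A`, so on a connected space the intermediate
value theorem makes it take every value between `0` and its value `> ε₀` at a point outside
the `ε₀`-thickening, in particular a value in `(ε₀, ε₁]`. -/

namespace Metric

variable {X : Type*} [MetricSpace X]

theorem mem_cthickening_iff_infDist_le_s10 {δ : ℝ} {E : Set X} {x : X} (hδ : 0 ≤ δ)
    (hE : E.Nonempty) : x ∈ cthickening δ E ↔ infDist x E ≤ δ := by
  rw [mem_cthickening_iff, infDist,
    ← ENNReal.le_ofReal_iff_toReal_le (infEDist_ne_top hE) hδ]

theorem exists_infDist_eq_of_le_infDist [PreconnectedSpace X] {A : Set X} {a y : X}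
    (ha : a ∈ A) {c : ℝ} (hc : 0 ≤ c) (hcy : c ≤ infDist y A) : ∃ x, infDist x A = c := by
  have hc' : c ∈ Set.Icc (infDist a A) (infDist y A) := ⟨by rwa [infDist_zero_of_mem ha], hcy⟩
  exact intermediate_value_univ a y (continuous_infDist_pt A) hc'

end Metric

theorem cthickening_ssubset_cthickening_of_geodesic_general
    {X : Type*} [MetricSpace X] [ConnectedSpace X]
    (A : Set X) (hA : A.Nonempty) (ε₀ ε₁ : ℝ) (h0 : 0 < ε₀) (h01 : ε₀ < ε₁)
    (hne : Metric.cthickening ε₀ A ≠ Set.univ) :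
    Metric.cthickening ε₀ A ⊂ Metric.cthickening ε₁ A := by
  obtain ⟨a, ha⟩ := hA
  obtain ⟨y, hy⟩ := (Set.ne_univ_iff_exists_notMem _).1 hne
  rw [Metric.mem_cthickening_iff_infDist_le_s10 h0.le ⟨a, ha⟩, not_le] at hy
  obtain ⟨x, hx⟩ := Metric.exists_infDist_eq_of_le_infDist ha
    (le_min (h0.trans h01).le (h0.trans hy).le) (min_le_right ε₁ (Metric.infDist y A))
  refine (Set.ssubset_iff_of_subset (Metric.cthickening_mono h01.le A)).2 ⟨x, ?_, ?_⟩
  · rw [Metric.mem_cthickening_iff_infDist_le_s10 (h0.trans h01).le ⟨a, ha⟩, hx]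
    exact min_le_left _ _
  · rw [Metric.mem_cthickening_iff_infDist_le_s10 h0.le ⟨a, ha⟩, hx, not_le]
    exact lt_min h01 hy

/-- In a compact connected geodesic metric space, if the `ε₀`-thickening of a nonempty
set is not the whole space, then it is strictly contained in the `ε₁`-thickening for any
`ε₁ > ε₀ > 0`. -/
theorem cthickening_ssubset_cthickening_of_geodesic
    {X : Type*} [MetricSpace X] [CompactSpace X] [ConnectedSpace X]
    (hgeo : IsGeodesicMetricSpace X)
    (A : Set X) (hA : A.Nonempty) (ε₀ ε₁ : ℝ) (h0 : 0 < ε₀) (h01 : ε₀ < ε₁)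
    (hne : Metric.cthickening ε₀ A ≠ Set.univ) :
    Metric.cthickening ε₀ A ⊂ Metric.cthickening ε₁ A :=
  cthickening_ssubset_cthickening_of_geodesic_general A hA ε₀ ε₁ h0 h01 hne
end

section
/- Let X be a compact geodesic metric space and define Φ on nonempty closed subsets of X by Φ(A) := Metric.hausdorffDist (A : Set X) Set.univ. Then Φ is a Lyapunov function for the semiflow π(A,t) = Metric.cthickening t A with attractor {X}: (1) for nonempty closed A, Φ(A) = 0 if and only if A = Set.univ; and (2) for every nonempty closed A and t > 0 with Metric.cthickening t A ≠ Set.univ, Φ(Metric.cthickening t A) < Φ(A). -/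
open Metric Set

lemma edist_ne_top_univ {X : Type*} [MetricSpace X] [CompactSpace X]
    {A : Set X} (hA : A.Nonempty) : EMetric.hausdorffEdist A (Set.univ : Set X) ≠ ⊤ := by
  have : Nonempty X := ⟨hA.some⟩
  exact Metric.hausdorffEdist_ne_top_of_nonempty_of_bounded hA univ_nonempty
    (Bornology.IsBounded.subset (isCompact_univ.isBounded) (subset_univ A))
    isCompact_univ.isBounded

lemma key_infdist {X : Type*} [MetricSpace X] [CompactSpace X]
    (hgeo : IsGeodesicMetricSpace X) {A : Set X} (hA : A.Nonempty) (hAc : IsClosed A)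
    {t : ℝ} (ht : 0 < t) (x : X) :
    Metric.infDist x (Metric.cthickening t A) ≤ max (Metric.infDist x A - t) 0 := by
  obtain ⟨a, haA, hd⟩ := (hAc.isCompact).exists_infDist_eq_dist hA x
  by_cases hle : Metric.infDist x A ≤ t
  · have hx : x ∈ Metric.cthickening t A :=
      Metric.mem_cthickening_of_dist_le x a t A haA (hd ▸ hle)
    have : Metric.infDist x (Metric.cthickening t A) = 0 :=
      Metric.infDist_zero_of_mem hx
    simp [this]
  · push_neg at hle
    set d := Metric.infDist x A with hddef
    have hd' : dist a x = d := by rw [hd, dist_comm]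
    obtain ⟨γ, hγ0, hγ1, hγd⟩ := hgeo a x
    rw [hd'] at hγ1 hγd
    have htmem : t ∈ Set.Icc (0:ℝ) d := ⟨ht.le, hle.le⟩
    have hdmem : d ∈ Set.Icc (0:ℝ) d := ⟨le_trans ht.le hle.le, le_rfl⟩
    have h0mem : (0:ℝ) ∈ Set.Icc (0:ℝ) d := ⟨le_rfl, le_trans ht.le hle.le⟩
    have hp : γ t ∈ Metric.cthickening t A := by
      apply Metric.mem_cthickening_of_dist_le (γ t) a t A haA
      have := hγd t htmem 0 h0mem
      rw [hγ0] at this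
      rw [this]
      simp [abs_of_nonneg ht.le]
    have hdist : dist x (γ t) = d - t := by
      have := hγd d hdmem t htmem
      rw [hγ1] at this
      rw [this, abs_of_nonneg (by linarith)]
    calc Metric.infDist x (Metric.cthickening t A) ≤ dist x (γ t) :=
          Metric.infDist_le_dist_of_mem hp
      _ = d - t := hdist
      _ ≤ max (d - t) 0 := le_max_left _ _

/-- In a compact geodesic metric space, `Φ(A) := d_H(A, univ)` is a Lyapunov function
for the semiflow `π(A,t) = cthickening t A` with attractor the whole space:
(1) `Φ(A) = 0` iff `A = univ`; (2) `Φ` strictly decreases along nontrivial pieces of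
trajectories that have not yet reached the whole space. -/
theorem hausdorffDist_univ_is_lyapunov
    {X : Type*} [MetricSpace X] [CompactSpace X]
    (hgeo : IsGeodesicMetricSpace X) :
    (∀ A : Set X, A.Nonempty → IsClosed A →
      (Metric.hausdorffDist A Set.univ = 0 ↔ A = Set.univ)) ∧
    (∀ A : Set X, A.Nonempty → IsClosed A → ∀ t : ℝ, 0 < t →
      Metric.cthickening t A ≠ Set.univ →
      Metric.hausdorffDist (Metric.cthickening t A) Set.univ <
        Metric.hausdorffDist A Set.univ) := by
  have part1 : ∀ A : Set X, A.Nonempty → IsClosed A →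
      (Metric.hausdorffDist A Set.univ = 0 ↔ A = Set.univ) := by
    intro A hA hAc
    exact IsClosed.hausdorffDist_zero_iff_eq hAc isClosed_univ (edist_ne_top_univ hA)
  refine ⟨part1, ?_⟩
  intro A hA hAc t ht hne
  set Φ := Metric.hausdorffDist A Set.univ with hΦ
  have hCne : (Metric.cthickening t A).Nonempty :=
    hA.mono (Metric.self_subset_cthickening A)
  have hCc : IsClosed (Metric.cthickening t A) := Metric.isClosed_cthickening
  -- infdist x A ≤ Φ for all x
  have hbound : ∀ x : X, Metric.infDist x A ≤ Φ := by
    intro x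
    have := Metric.infDist_le_hausdorffDist_of_mem (mem_univ x)
      (by rw [EMetric.hausdorffEdist_comm]; exact edist_ne_top_univ hA)
    rwa [Metric.hausdorffDist_comm] at this
  have hkey : Metric.hausdorffDist (Metric.cthickening t A) Set.univ ≤ max (Φ - t) 0 := by
    apply Metric.hausdorffDist_le_of_infDist (le_max_right _ _)
    · intro x _
      rw [Metric.infDist_zero_of_mem (mem_univ x)]
      exact le_max_right _ _
    · intro x _
      calc Metric.infDist x (Metric.cthickening t A)
          ≤ max (Metric.infDist x A - t) 0 := key_infdist hgeo hA hAc ht x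
        _ ≤ max (Φ - t) 0 := max_le_max (by linarith [hbound x]) le_rfl
  have hCpos : 0 < Metric.hausdorffDist (Metric.cthickening t A) Set.univ := by
    rcases lt_or_eq_of_le (Metric.hausdorffDist_nonneg
      (s := Metric.cthickening t A) (t := (Set.univ : Set X))) with h | h
    · exact h
    · exact absurd ((part1 _ hCne hCc).mp h.symm) hne
  rcases le_or_gt t Φ with h | h
  · calc Metric.hausdorffDist (Metric.cthickening t A) Set.univ ≤ max (Φ - t) 0 := hkey
      _ = Φ - t := max_eq_left (by linarith)
      _ < Φ := by linarith
  · exfalso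
    have : Metric.hausdorffDist (Metric.cthickening t A) Set.univ ≤ 0 := by
      calc _ ≤ max (Φ - t) 0 := hkey
        _ = 0 := max_eq_right (by linarith)
    linarith
end

section
/- Let X be a geodesic metric space, let x, y ∈ X and let 0 ≤ ε ≤ ε'. If Metric.closedBall x ε = Metric.closedBall y ε, then Metric.closedBall x ε' = Metric.closedBall y ε'. (In a geodesic space, once the closed balls about two points coincide for some radius, they coincide for every larger radius; consequently, if the map z ↦ closedBall z ε' is injective for some ε', it is injective for all 0 ≤ ε ≤ ε'.) -/
lemma closedBall_subset_aux
    {X : Type*} [MetricSpace X] (hgeo : IsGeodesicMetricSpace X)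
    (x y : X) (ε ε' : ℝ) (hε : 0 ≤ ε) (hεε' : ε ≤ ε')
    (hball : Metric.closedBall x ε = Metric.closedBall y ε) :
    Metric.closedBall x ε' ⊆ Metric.closedBall y ε' := by
  intro z hz
  rw [Metric.mem_closedBall] at hz ⊢
  rcases le_or_gt (dist z x) ε with h | h
  · have : z ∈ Metric.closedBall y ε := hball ▸ Metric.mem_closedBall.mpr h
    exact le_trans (Metric.mem_closedBall.mp this) hεε'
  · obtain ⟨γ, h0, h1, hd⟩ := hgeo x z
    have hdxz : dist x z = dist z x := dist_comm x z
    have hεmem : ε ∈ Set.Icc (0 : ℝ) (dist x z) := ⟨hε, by rw [hdxz]; exact h.le⟩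
    have h0mem : (0 : ℝ) ∈ Set.Icc (0 : ℝ) (dist x z) := ⟨le_refl _, dist_nonneg⟩
    have hdmem : dist x z ∈ Set.Icc (0 : ℝ) (dist x z) := ⟨dist_nonneg, le_refl _⟩
    have hwx : dist (γ ε) x = ε := by
      have := hd ε hεmem 0 h0mem
      rw [h0] at this
      rw [this, sub_zero, abs_of_nonneg hε]
    have hwz : dist (γ ε) z = dist x z - ε := by
      have := hd ε hεmem (dist x z) hdmem
      rw [h1] at this
      rw [this, abs_of_nonpos (by linarith [hεmem.2]), neg_sub]
    have hwy : dist (γ ε) y ≤ ε := by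
      have : γ ε ∈ Metric.closedBall y ε := hball ▸ Metric.mem_closedBall.mpr hwx.le
      exact Metric.mem_closedBall.mp this
    calc dist z y ≤ dist z (γ ε) + dist (γ ε) y := dist_triangle _ _ _
      _ ≤ (dist x z - ε) + ε := by rw [dist_comm z (γ ε), hwz]; linarith
      _ = dist z x := by rw [hdxz]; ring
      _ ≤ ε' := hz

/-- In a geodesic metric space, once the closed balls about two points coincide for some
radius `ε ≥ 0`, they coincide for every larger radius `ε'`. -/
theorem closedBall_eq_of_closedBall_eq_of_le
    {X : Type*} [MetricSpace X] (hgeo : IsGeodesicMetricSpace X)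
    (x y : X) (ε ε' : ℝ) (hε : 0 ≤ ε) (hεε' : ε ≤ ε')
    (hball : Metric.closedBall x ε = Metric.closedBall y ε) :
    Metric.closedBall x ε' = Metric.closedBall y ε' := by
  apply Set.Subset.antisymm
  · exact closedBall_subset_aux hgeo x y ε ε' hε hεε' hball
  · exact closedBall_subset_aux hgeo y x ε ε' hε hεε' hball.symm
end

section
/- Let X be a compact geodesic metric space with more than one point, and let w be a Whitney map on X. Then for every ε₀ > 0 there exists t₀ > 0 such that for every x ∈ X and every δ ≥ 0, if w applied to the nonempty compact set Metric.closedBall x δ is less than t₀, then δ < ε₀. (Every closed ball whose Whitney value is below t₀ has radius below ε₀.) -/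
/-- A Whitney map on the hyperspace of a compact metric space: a continuous function
vanishing on singletons and strictly monotone with respect to strict inclusion. -/
def IsWhitneyMap {X : Type*} [MetricSpace X]
    (w : TopologicalSpace.NonemptyCompacts X → ℝ) : Prop :=
  Continuous w ∧
  (∀ x : X, w ⟨⟨{x}, isCompact_singleton⟩, Set.singleton_nonempty x⟩ = 0) ∧
  (∀ A B : TopologicalSpace.NonemptyCompacts X,
    (A : Set X) ⊆ (B : Set X) → A ≠ B → w A < w B)

open Metric TopologicalSpace

namespace TopologicalSpace.NonemptyCompacts

variable {X : Type*} [MetricSpace X]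

theorem diam_le_diam_add_two_mul_dist (A B : NonemptyCompacts X) :
    diam (A : Set X) ≤ diam (B : Set X) + 2 * dist A B := by
  have hfin : hausdorffEDist (A : Set X) B ≠ ⊤ :=
    hausdorffEDist_ne_top_of_nonempty_of_bounded A.nonempty B.nonempty
      A.isCompact.isBounded B.isCompact.isBounded
  have close (p : X) (hp : p ∈ A) : ∃ p' ∈ B, dist p p' ≤ dist A B := by
    obtain ⟨p', hp', hpp'⟩ := B.isCompact.exists_infDist_eq_dist B.nonempty p
    refine ⟨p', hp', ?_⟩
    rw [← hpp', NonemptyCompacts.dist_eq]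
    exact infDist_le_hausdorffDist_of_mem hp hfin
  refine diam_le_of_forall_dist_le (by positivity) fun p hp q hq => ?_
  obtain ⟨p', hp', hpp'⟩ := close p hp
  obtain ⟨q', hq', hqq'⟩ := close q hq
  calc dist p q ≤ dist p p' + dist p' q' + dist q' q := dist_triangle4 _ _ _ _
    _ ≤ dist A B + diam (B : Set X) + dist A B := by
      gcongr
      · exact dist_le_diam_of_mem B.isCompact.isBounded hp' hq'
      · rwa [dist_comm]
    _ = diam (B : Set X) + 2 * dist A B := by ring

theorem lipschitzWith_diam : LipschitzWith 2 fun A : NonemptyCompacts X => diam (A : Set X) :=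
  LipschitzWith.of_le_add_mul 2 diam_le_diam_add_two_mul_dist

theorem continuous_diam : Continuous fun A : NonemptyCompacts X => diam (A : Set X) :=
  lipschitzWith_diam.continuous

end TopologicalSpace.NonemptyCompacts

namespace IsWhitneyMap

variable {X : Type*} [MetricSpace X] {w : NonemptyCompacts X → ℝ}

theorem pos_of_diam_pos (hw : IsWhitneyMap w) {A : NonemptyCompacts X}
    (hA : 0 < diam (A : Set X)) : 0 < w A := by
  obtain ⟨x, hx⟩ := A.nonempty
  have hne : (⟨⟨{x}, isCompact_singleton⟩, Set.singleton_nonempty x⟩ : NonemptyCompacts X) ≠ A :=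
    fun h => hA.ne' (h ▸ diam_singleton)
  simpa only [hw.2.1 x] using hw.2.2 _ A (Set.singleton_subset_iff.2 hx) hne

theorem exists_pos_le_of_le_diam [CompactSpace X] (hw : IsWhitneyMap w) {ε : ℝ} (hε : 0 < ε) :
    ∃ t > 0, ∀ A : NonemptyCompacts X, ε ≤ diam (A : Set X) → t ≤ w A := by
  set S := {A : NonemptyCompacts X | ε ≤ diam (A : Set X)}
  rcases S.eq_empty_or_nonempty with hS | hS
  · exact ⟨1, one_pos, fun A hA => absurd hA (Set.eq_empty_iff_forall_notMem.1 hS A)⟩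
  have hScompact : IsCompact S :=
    (isClosed_le continuous_const NonemptyCompacts.continuous_diam).isCompact
  obtain ⟨A₀, hA₀, hmin⟩ := hScompact.exists_isMinOn hS hw.1.continuousOn
  exact ⟨w A₀, hw.pos_of_diam_pos (hε.trans_le hA₀), fun A hA => hmin hA⟩

end IsWhitneyMap

namespace IsGeodesicMetricSpace

variable {X : Type*} [MetricSpace X]

theorem exists_dist_eq (hgeo : IsGeodesicMetricSpace X) (x y : X) {r : ℝ} (hr₀ : 0 ≤ r)
    (hr : r ≤ dist x y) : ∃ z, dist x z = r := by
  obtain ⟨γ, hγ₀, -, hγ⟩ := hgeo x y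
  refine ⟨γ r, ?_⟩
  rw [← hγ₀, hγ 0 ⟨le_rfl, dist_nonneg⟩ r ⟨hr₀, hr⟩, zero_sub, abs_neg, abs_of_nonneg hr₀]

theorem min_le_diam_closedBall (hgeo : IsGeodesicMetricSpace X) (x y : X) {δ : ℝ}
    (hδ : 0 ≤ δ) : min δ (dist x y) ≤ diam (closedBall x δ) := by
  obtain ⟨z, hz⟩ := hgeo.exists_dist_eq x y (le_min hδ dist_nonneg) (min_le_right _ _)
  have hzball : z ∈ closedBall x δ := by
    rw [mem_closedBall, dist_comm, hz]
    exact min_le_left _ _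
  exact hz ▸ dist_le_diam_of_mem isBounded_closedBall (mem_closedBall_self hδ) hzball

end IsGeodesicMetricSpace

theorem exists_half_dist_le_dist {X : Type*} [PseudoMetricSpace X] (a b x : X) :
    ∃ y, dist a b / 2 ≤ dist x y := by
  by_contra! h
  linarith [h a, h b, dist_triangle_left a b x]

/-- In a compact geodesic metric space with more than one point, for every `ε₀ > 0`
there is a `t₀ > 0` such that every closed ball whose Whitney value is below `t₀` has
radius below `ε₀`. -/
theorem whitney_small_value_small_radius
    {X : Type*} [MetricSpace X] [CompactSpace X] [Nontrivial X]
    (hgeo : IsGeodesicMetricSpace X)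
    (w : TopologicalSpace.NonemptyCompacts X → ℝ) (hw : IsWhitneyMap w) :
    ∀ ε₀ : ℝ, 0 < ε₀ → ∃ t₀ : ℝ, 0 < t₀ ∧
      ∀ x : X, ∀ δ : ℝ, ∀ hδ : 0 ≤ δ,
        w ⟨⟨Metric.closedBall x δ, Metric.isClosed_closedBall.isCompact⟩,
            (Metric.nonempty_closedBall).2 hδ⟩ < t₀ → δ < ε₀ := by
  intro ε₀ hε₀
  obtain ⟨a, b, hab⟩ := exists_pair_ne X
  have hhalf : 0 < dist a b / 2 := half_pos (dist_pos.2 hab)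
  obtain ⟨t₀, ht₀, hle⟩ := hw.exists_pos_le_of_le_diam (lt_min hε₀ hhalf)
  refine ⟨t₀, ht₀, fun x δ hδ hwlt => ?_⟩
  have hsmall : diam (closedBall x δ) < min ε₀ (dist a b / 2) := lt_of_not_ge fun h =>
    (hle ⟨⟨closedBall x δ, isClosed_closedBall.isCompact⟩, nonempty_closedBall.2 hδ⟩ h).not_gt hwlt
  obtain ⟨y, hy⟩ := exists_half_dist_le_dist a b x
  have hlarge := hgeo.min_le_diam_closedBall x y hδ
  by_contra! hδε
  have : min ε₀ (dist a b / 2) ≤ min δ (dist x y) := min_le_min hδε hy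
  linarith
end

section
/- Let X be a metric space, L > 0, and γ : [0, L] → X a geodesic path, i.e. dist (γ s) (γ t) = |s - t| for all s, t ∈ [0, L]. Then for every δ with 0 ≤ δ < L/2 and all s, s' ∈ [0, L] with s ≠ s', Metric.closedBall (γ s) δ ≠ Metric.closedBall (γ s') δ. (Hence the points of a geodesic segment form an uncountable uniformly discrete set for the ultrametric in which two points are close when small closed balls about them coincide; this yields the non-separability of (X, d_u) for a compact geodesic space X.) -/
lemma closedBall_ne_of_geodesic_path_aux
    {X : Type*} [MetricSpace X] (L : ℝ) (hL : 0 < L) (γ : ℝ → X)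
    (hγ : ∀ s ∈ Set.Icc (0 : ℝ) L, ∀ t ∈ Set.Icc (0 : ℝ) L, dist (γ s) (γ t) = |s - t|)
    (δ : ℝ) (hδ0 : 0 ≤ δ) (hδ : δ < L / 2) :
    ∀ s ∈ Set.Icc (0 : ℝ) L, ∀ s' ∈ Set.Icc (0 : ℝ) L, s < s' →
      Metric.closedBall (γ s) δ ≠ Metric.closedBall (γ s') δ := by
  intro s hs s' hs' hlt h
  obtain ⟨hs0, hsL⟩ := hs
  obtain ⟨hs'0, hs'L⟩ := hs'
  rcases le_or_gt δ s with hc | hc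
  · -- witness t = s - δ, in ball of s, not in ball of s'
    have ht : s - δ ∈ Set.Icc (0 : ℝ) L := ⟨by linarith, by linarith⟩
    have h1 : γ (s - δ) ∈ Metric.closedBall (γ s) δ := by
      simp only [Metric.mem_closedBall, dist_comm]
      rw [hγ s ⟨hs0, hsL⟩ (s - δ) ht]
      rw [abs_of_nonneg (by linarith)]; linarith
    rw [h] at h1
    simp only [Metric.mem_closedBall, dist_comm] at h1
    rw [hγ s' ⟨hs'0, hs'L⟩ (s - δ) ht, abs_of_nonneg (by linarith)] at h1
    linarith
  · rcases le_or_gt (s' + δ) L with hc2 | hc2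
    · -- witness t = s' + δ
      have ht : s' + δ ∈ Set.Icc (0 : ℝ) L := ⟨by linarith, hc2⟩
      have h1 : γ (s' + δ) ∈ Metric.closedBall (γ s') δ := by
        simp only [Metric.mem_closedBall, dist_comm]
        rw [hγ s' ⟨hs'0, hs'L⟩ (s' + δ) ht, abs_of_nonpos (by linarith)]
        linarith
      rw [← h] at h1
      simp only [Metric.mem_closedBall, dist_comm] at h1
      rw [hγ s ⟨hs0, hsL⟩ (s' + δ) ht, abs_of_nonpos (by linarith)] at h1
      linarith
    · -- witness t = 0 : s < δ so γ 0 ∈ ball s; s' > L - δ > δ so γ 0 ∉ ball s'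
      have ht : (0 : ℝ) ∈ Set.Icc (0 : ℝ) L := ⟨le_refl _, le_of_lt hL⟩
      have h1 : γ 0 ∈ Metric.closedBall (γ s) δ := by
        simp only [Metric.mem_closedBall, dist_comm]
        rw [hγ s ⟨hs0, hsL⟩ 0 ht, abs_of_nonneg (by linarith)]
        linarith
      rw [h] at h1
      simp only [Metric.mem_closedBall, dist_comm] at h1
      rw [hγ s' ⟨hs'0, hs'L⟩ 0 ht, abs_of_nonneg (by linarith)] at h1
      linarith

/-- Along a geodesic path `γ : [0,L] → X`, for any radius `0 ≤ δ < L/2`, distinct points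
of the geodesic segment have distinct closed `δ`-balls. -/
theorem closedBall_ne_of_geodesic_path
    {X : Type*} [MetricSpace X] (L : ℝ) (hL : 0 < L) (γ : ℝ → X)
    (hγ : ∀ s ∈ Set.Icc (0 : ℝ) L, ∀ t ∈ Set.Icc (0 : ℝ) L, dist (γ s) (γ t) = |s - t|)
    (δ : ℝ) (hδ0 : 0 ≤ δ) (hδ : δ < L / 2) :
    ∀ s ∈ Set.Icc (0 : ℝ) L, ∀ s' ∈ Set.Icc (0 : ℝ) L, s ≠ s' →
      Metric.closedBall (γ s) δ ≠ Metric.closedBall (γ s') δ := by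
  intro s hs s' hs' hne
  rcases hne.lt_or_gt with hlt | hlt
  · exact closedBall_ne_of_geodesic_path_aux L hL γ hγ δ hδ0 hδ s hs s' hs' hlt
  · exact (closedBall_ne_of_geodesic_path_aux L hL γ hγ δ hδ0 hδ s' hs' s hs hlt).symm
end
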